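/- arXiv:math/0410123 — 5 statements merged into one kernel-verified Lean document; each statement's English description precedes it below -/
import Mathlib

section
/- Let A = kQ/I with Q a finite quiver and I an admissible ideal, E the subalgebra of A spanned by the trivial paths (vertex idempotents), and rad A the Jacobson radical of A. Define, for each n ≥ 0, μ_n : A ⊗_E kΓ_n ⊗_E A → A ⊗_E (rad A)^{⊗_E n} ⊗_E A by μ_n(1 ⊗ α_1⋯α_n ⊗ 1) = 1 ⊗ ᾱ_1 ⊗ ⋯ ⊗ ᾱ_n ⊗ 1, and ω_n : A ⊗_E (rad A)^{⊗_E n} ⊗_E A → A ⊗_E kΓ_n ⊗_E A by sending 1 ⊗ p̄'_1ᾱ_1 ⊗ p̄_2 ⊗ ⋯ ⊗ ᾱ_n p̄'_n ⊗ 1 to p̄'_1 ⊗ α_1 p_2 ⋯ p_{n-1} α_n ⊗ p̄'_n if α_1 p_2⋯p_{n-1}α_n ∈ Γ_n and to 0 otherwise. Then ω_n ∘ μ_n = id on A ⊗_E kΓ_n ⊗_E A. -/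
open scoped Classical TensorProduct BigOperators

noncomputable section

namespace StringAlgebras

variable {V Arr : Type}

/-- Consecutive arrows in the list are composable: the target of each arrow is
the source of the next one.  A nonempty such list is a (nontrivial) path of the
quiver with vertex set `V`, arrow set `Arr`, and source/target maps `src`, `tgt`. -/
def Composable (src tgt : Arr → V) (l : List Arr) : Prop :=
  l.Chain' fun a b => tgt a = src b

/-- A nontrivial path of the quiver. -/
def IsPath (src tgt : Arr → V) (l : List Arr) : Prop :=
  l ≠ [] ∧ Composable src tgt l

/-- The source vertex of a (nontrivial) path. -/
def srcOf (src : Arr → V) (l : List Arr) : Option V := l.head?.map src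

/-- The target vertex of a (nontrivial) path. -/
def tgtOf (tgt : Arr → V) (l : List Arr) : Option V := l.getLast?.map tgt

/-- The quiver is triangular: it has no oriented cycles, i.e. no nontrivial path
has equal source and target. -/
def Triangular (src tgt : Arr → V) : Prop :=
  ∀ l : List Arr, IsPath src tgt l → srcOf src l ≠ tgtOf tgt l

/-- Membership of a path in the quadratic monomial ideal `I` generated by the set
`R` of relations (composable pairs of arrows): some length-2 generator occurs as an
infix, i.e. the path can be written as `u · r · v` with `r ∈ R`. -/
def InI (R : Set (Arr × Arr)) (l : List Arr) : Prop :=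
  ∃ a b : Arr, (a, b) ∈ R ∧ [a, b] <:+: l

/-- `Γ_n`: paths `α₁ ⋯ αₙ` of length `n` with `αᵢαᵢ₊₁ ∈ I` for all `1 ≤ i < n`. -/
def Gamma (src tgt : Arr → V) (R : Set (Arr × Arr)) (n : ℕ) (l : List Arr) : Prop :=
  l.length = n ∧ Composable src tgt l ∧ ∀ p ∈ l.zip l.tail, p ∈ R

/-- Condition (S2): every vertex is the source of at most two arrows and the target
of at most two arrows. -/
def S2 (src tgt : Arr → V) : Prop :=
  ∀ v : V, Set.ncard {a : Arr | src a = v} ≤ 2 ∧ Set.ncard {a : Arr | tgt a = v} ≤ 2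

/-- Condition (S3): for every arrow `a` there is at most one arrow `b` with
`ab ∉ I` and at most one arrow `c` with `ca ∉ I`. -/
def S3 (src tgt : Arr → V) (R : Set (Arr × Arr)) : Prop :=
  (∀ a b b' : Arr, tgt a = src b → tgt a = src b' → (a, b) ∉ R → (a, b') ∉ R → b = b') ∧
  (∀ a c c' : Arr, tgt c = src a → tgt c' = src a → (c, a) ∉ R → (c', a) ∉ R → c = c')

/-- Condition (G1): for every arrow `a` there is at most one arrow `b` with
`ab ∈ I` and at most one arrow `c` with `ca ∈ I`. -/
def G1 (R : Set (Arr × Arr)) : Prop :=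
  (∀ a b b' : Arr, (a, b) ∈ R → (a, b') ∈ R → b = b') ∧
  (∀ a c c' : Arr, (c, a) ∈ R → (c', a) ∈ R → c = c')

section PresSection

variable (src tgt : Arr → V) (R : Set (Arr × Arr))
variable (k B : Type) [Field k] [Ring B] [Algebra k B] [Fintype V]

/-- A presentation of the `k`-algebra `B` as the quotient `A = kQ/I` of the path
algebra of the quiver `(V, Arr, src, tgt)` by the (quadratic) monomial ideal `I`
generated by `R`: `e` are the orthogonal vertex idempotents summing to `1`,
`arrB` are the classes of the arrows, products along relations or non-composable
pairs vanish, and the vertex idempotents together with the classes of nontrivial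
paths not in `I` form a `k`-basis of `B`. -/
structure Pres where
  e : V → B
  arrB : Arr → B
  idem : ∀ v, e v * e v = e v
  orth : ∀ v w, v ≠ w → e v * e w = 0
  sum_e : ∑ v : V, e v = 1
  src_mul : ∀ a, e (src a) * arrB a = arrB a
  mul_tgt : ∀ a, arrB a * e (tgt a) = arrB a
  rel_mul : ∀ a b, (a, b) ∈ R → arrB a * arrB b = 0
  noncomp_mul : ∀ a b, tgt a ≠ src b → arrB a * arrB b = 0
  bas : Module.Basis (V ⊕ {l : List Arr // IsPath src tgt l ∧ ¬InI R l}) k B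
  bas_inl : ∀ v, bas (Sum.inl v) = e v
  bas_inr : ∀ p, bas (Sum.inr p) = (p.1.map arrB).prod

end PresSection

section Defs

variable {src tgt : Arr → V} {R : Set (Arr × Arr)}
variable {k B : Type} [Field k] [Ring B] [Algebra k B] [Fintype V] [Fintype Arr]

/-- The class `p̄ ∈ B` of a path (the product of the classes of its arrows). -/
def Pres.pbar (P : Pres src tgt R k B) (l : List Arr) : B := (l.map P.arrB).prod

/-- The class of an optional arrow (`0` for `none`). -/
def Pres.arrO (P : Pres src tgt R k B) (o : Option Arr) : B := (o.map P.arrB).getD 0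

/-- The differential of the cochain complex `Hom_{E^e}(kΓ_•, A)` obtained from
Bardzell's minimal resolution: a degree-`(n-1)` cochain `h` (a function on paths,
supported on `Γ_{n-1}`) is sent to the cochain
`l = α₁⋯αₙ ↦ ᾱ₁ · h(α₂⋯αₙ) + (-1)ⁿ h(α₁⋯α_{n-1}) · ᾱₙ`. -/
def coDelta (P : Pres src tgt R k B) (φ : List Arr → B) : List Arr → B := fun l =>
  P.arrO l.head? * φ l.tail + (-1 : B) ^ l.length * (φ l.dropLast * P.arrO l.getLast?)

/-- Cup product of cochains on the minimal resolution:
`(f ∪ g)(α₁⋯αₙβ₁⋯β_m) = f(α₁⋯αₙ) · g(β₁⋯β_m)` where `n` is the degree of `f`. -/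
def cup (n : ℕ) (φ ψ : List Arr → B) : List Arr → B := fun l =>
  φ (l.take n) * ψ (l.drop n)

/-- The composition product `φ ∘ᵢ ψ` of cochains (of degrees `n` and `m`) on the
minimal resolution: the value `ψ(αᵢ⋯α_{i+m-1})` is expanded in the path basis of
`B` and each basis path is substituted into the argument of `φ`; a summand
survives only if the substituted sequence lies in `Γ_n`. -/
def circ (P : Pres src tgt R k B) (i n m : ℕ) (φ ψ : List Arr → B) : List Arr → B := fun l =>
  (P.bas.repr (ψ ((l.drop (i - 1)).take m))).sum fun j c =>
    Sum.elim (fun _ : V => (0 : B))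
      (fun q : {l' : List Arr // IsPath src tgt l' ∧ ¬InI R l'} =>
        if Gamma src tgt R n (l.take (i - 1) ++ q.1 ++ l.drop (i - 1 + m)) then
          c • φ (l.take (i - 1) ++ q.1 ++ l.drop (i - 1 + m))
        else 0) j

/-- The composition product `φ ∘ ψ = ∑ᵢ (-1)^{(i-1)(m-1)} φ ∘ᵢ ψ`. -/
def compProd (P : Pres src tgt R k B) (n m : ℕ) (φ ψ : List Arr → B) : List Arr → B := fun l =>
  ∑ i ∈ Finset.Icc 1 n, ((-1 : B) ^ ((i - 1) * (m - 1))) * circ P i n m φ ψ l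

/-- The Gerstenhaber bracket `[φ, ψ] = φ ∘ ψ - (-1)^{(n-1)(m-1)} ψ ∘ φ` at the
cochain level. -/
def bracket (P : Pres src tgt R k B) (n m : ℕ) (φ ψ : List Arr → B) : List Arr → B := fun l =>
  compProd P n m φ ψ l - ((-1 : B) ^ ((n - 1) * (m - 1))) * compProd P m n ψ φ l

/-- The `A-A`-bimodule action on coefficient pairs: `a ⊗ b ↦ (a * u) ⊗ (v * b)`.
A pair `a ⊗ b` records the outer tensor factors of an element `a ⊗ x ⊗ b`. -/
def act (u v : B) : B ⊗[k] B →ₗ[k] B ⊗[k] B :=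
  TensorProduct.map (LinearMap.mulRight k u) (LinearMap.mulLeft k v)

end Defs

/-- Index of the basis of `A ⊗_E (rad A)^{⊗n} ⊗_E A`: an `n`-tuple of nontrivial
paths not in `I`, consecutively composable. -/
def Tup (src tgt : Arr → V) (R : Set (Arr × Arr)) (n : ℕ) (t : List (List Arr)) : Prop :=
  t.length = n ∧ (∀ p ∈ t, IsPath src tgt p ∧ ¬InI R p) ∧ Composable src tgt t.flatten

/-- Model of the `A-A`-bimodule `A ⊗_E (rad A)^{⊗n} ⊗_E A`: the free bimodule on
tuples of paths, a basis tuple with coefficient `a ⊗ b` representing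
`a ⊗ r̄₁ ⊗ ⋯ ⊗ r̄ₙ ⊗ b`. -/
abbrev Nmod (src tgt : Arr → V) (R : Set (Arr × Arr)) (k B : Type) [Field k] [Ring B]
    [Algebra k B] (n : ℕ) : Type :=
  {t : List (List Arr) // Tup src tgt R n t} →₀ (B ⊗[k] B)

/-- Model of the `A-A`-bimodule `A ⊗_E kΓₙ ⊗_E A` of Bardzell's minimal
resolution: the free bimodule on `Γₙ`. -/
abbrev Mmod (src tgt : Arr → V) (R : Set (Arr × Arr)) (k B : Type) [Field k] [Ring B]
    [Algebra k B] (n : ℕ) : Type :=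
  {l : List Arr // Gamma src tgt R n l} →₀ (B ⊗[k] B)

section Maps

variable {src tgt : Arr → V} {R : Set (Arr × Arr)}
variable {k B : Type} [Field k] [Ring B] [Algebra k B] [Fintype V] [Fintype Arr]

theorem sTup_tup {n : ℕ} {l : List Arr} (h : Gamma src tgt R n l) :
    Tup src tgt R n (l.map fun a => [a]) := by
  refine ⟨by simpa using h.1, ?_, ?_⟩
  · intro p hp
    simp only [List.mem_map] at hp
    obtain ⟨a, -, rfl⟩ := hp
    refine ⟨⟨by simp, List.isChain_singleton a⟩, ?_⟩
    rintro ⟨x, y, -, hinf⟩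
    have := hinf.length_le
    simp at this
  · have hj : ∀ l' : List Arr, (l'.map fun a => [a]).flatten = l' := by
      intro l'
      induction l' with
      | nil => simp
      | cons a t ih => simp [ih]
    rw [hj]; exact h.2.1

/-- The comparison map `μₙ : A ⊗ kΓₙ ⊗ A → A ⊗ (rad A)^{⊗n} ⊗ A`,
`1 ⊗ α₁⋯αₙ ⊗ 1 ↦ 1 ⊗ ᾱ₁ ⊗ ⋯ ⊗ ᾱₙ ⊗ 1`. -/
def muMap (n : ℕ) (x : Mmod src tgt R k B n) : Nmod src tgt R k B n :=
  Finsupp.mapDomain (fun l => ⟨l.1.map fun a => [a], sTup_tup l.2⟩) x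

/-- The candidate element of `Γₙ` associated to a tuple `(p₁, …, pₙ)` of paths:
the last arrow of `p₁`, followed by the middle paths, followed by the first arrow
of `pₙ`. -/
def omegaIdx : List (List Arr) → List Arr
  | [] => []
  | [p] => p.getLast?.toList
  | p :: rest => p.getLast?.toList ++ rest.dropLast.flatten ++ (rest.getLast?.getD []).head?.toList

/-- The left residual `p̄'₁` of a tuple (for `p₁ = p'₁α₁`). -/
def omegaU (P : Pres src tgt R k B) : List (List Arr) → B
  | [] => 1
  | p :: _ => P.pbar p.dropLast

/-- The right residual `p̄'ₙ` of a tuple (for `pₙ = αₙp'ₙ`, `n ≥ 2`). -/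
def omegaV (P : Pres src tgt R k B) : List (List Arr) → B
  | [] => 1
  | [_] => 1
  | _ :: rest => P.pbar ((rest.getLast?.getD []).tail)

/-- The comparison map `ωₙ : A ⊗ (rad A)^{⊗n} ⊗ A → A ⊗ kΓₙ ⊗ A`, sending
`1 ⊗ p̄'₁ᾱ₁ ⊗ p̄₂ ⊗ ⋯ ⊗ ᾱₙp̄'ₙ ⊗ 1` to `p̄'₁ ⊗ α₁p₂⋯p_{n-1}αₙ ⊗ p̄'ₙ` if
`α₁p₂⋯p_{n-1}αₙ ∈ Γₙ` and to `0` otherwise. -/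
def omegaMap (P : Pres src tgt R k B) (n : ℕ) (x : Nmod src tgt R k B n) :
    Mmod src tgt R k B n :=
  x.sum fun t c =>
    if h : Gamma src tgt R n (omegaIdx t.1) then
      Finsupp.single ⟨omegaIdx t.1, h⟩ (act (k := k) (omegaU P t.1) (omegaV P t.1) c)
    else 0

/-- Merging of the `i`-th and `(i+1)`-st entries of a tuple (0-based),
corresponding to the product `r_j r_{j+1}` in the bar differential. -/
def mergeAt (t : List (List Arr)) (i : ℕ) : List (List Arr) :=
  t.take i ++ [(t[i]?.getD []) ++ (t[i + 1]?.getD [])] ++ t.drop (i + 2)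

/-- The differential `b` of the reduced bar-type resolution `K_rad`:
`b(1⊗r₁⊗⋯⊗r_{n+1}⊗1) = r₁⊗⋯⊗1 + ∑ⱼ (-1)ʲ 1⊗⋯⊗rⱼr_{j+1}⊗⋯⊗1 + (-1)^{n+1} 1⊗⋯⊗r_{n+1}`;
a merged tuple whose merged entry lies in `I` indexes the zero element and is
dropped. -/
def bmap (P : Pres src tgt R k B) (n : ℕ) (x : Nmod src tgt R k B (n + 1)) :
    Nmod src tgt R k B n :=
  x.sum fun t c =>
    (if h : Tup src tgt R n t.1.tail then
        Finsupp.single ⟨t.1.tail, h⟩ (act (k := k) (P.pbar (t.1.head?.getD [])) 1 c)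
      else 0)
    + (∑ i ∈ Finset.range n,
        if h : Tup src tgt R n (mergeAt t.1 i) then
          Finsupp.single ⟨mergeAt t.1 i, h⟩ (((-1 : k) ^ (i + 1)) • c)
        else 0)
    + (if h : Tup src tgt R n t.1.dropLast then
        Finsupp.single ⟨t.1.dropLast, h⟩
          (((-1 : k) ^ (n + 1)) • act (k := k) 1 (P.pbar (t.1.getLast?.getD [])) c)
      else 0)

/-- The differential `δ` of Bardzell's minimal resolution (quadratic monomial case):
`δ(1 ⊗ α₁⋯α_{n+1} ⊗ 1) = ᾱ₁ ⊗ α₂⋯α_{n+1} ⊗ 1 + (-1)^{n+1} 1 ⊗ α₁⋯αₙ ⊗ ᾱ_{n+1}`. -/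
def dmin (P : Pres src tgt R k B) (n : ℕ) (x : Mmod src tgt R k B (n + 1)) :
    Mmod src tgt R k B n :=
  x.sum fun l c =>
    (if h : Gamma src tgt R n l.1.tail then
        Finsupp.single ⟨l.1.tail, h⟩ (act (k := k) (P.arrO l.1.head?) 1 c)
      else 0)
    + (if h : Gamma src tgt R n l.1.dropLast then
        Finsupp.single ⟨l.1.dropLast, h⟩
          (((-1 : k) ^ (n + 1)) • act (k := k) 1 (P.arrO l.1.getLast?) c)
      else 0)

/-- The residue `p̄` of the type-(−) part of `x ∈ B` relative to a first arrow `a`: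
expand `x` in the path basis and sum `c_q • q̄.tail` over basis paths `q`
starting with the arrow `a` (so `q = a·p` contributes `c_q • p̄`). -/
def resMinus (P : Pres src tgt R k B) (x : B) (a : Arr) : B :=
  (P.bas.repr x).sum fun j c =>
    Sum.elim (fun _ : V => (0 : B))
      (fun q : {l' : List Arr // IsPath src tgt l' ∧ ¬InI R l'} =>
        if q.1.head? = some a then c • P.pbar q.1.tail else 0) j

/-- The type-(−) part of `x ∈ B` relative to a first arrow `a`: the sum of the
basis components of `x` on paths starting with the arrow `a`. -/
def fullMinus (P : Pres src tgt R k B) (x : B) (a : Arr) : B :=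
  (P.bas.repr x).sum fun j c =>
    Sum.elim (fun _ : V => (0 : B))
      (fun q : {l' : List Arr // IsPath src tgt l' ∧ ¬InI R l'} =>
        if q.1.head? = some a then c • P.pbar q.1 else 0) j

/-- The cochain `φ_≤` of Lemma 2.1/2.2: each type-(−) basis component
`(α₁⋯αₙ, ᾱ₁p̄)` of `φ` is replaced by its cohomologous shift
`(α₂⋯α_{n+1}, (-1)^{n+1} \overline{pα_{n+1}})`, the type-(0) and type-(+)
components being kept. -/
def phiLe (P : Pres src tgt R k B) (n : ℕ) (φ : List Arr → B) : List Arr → B := fun m =>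
  match m with
  | [] => φ []
  | a :: r =>
    (φ (a :: r) - fullMinus P (φ (a :: r)) a)
    + ∑ α : Arr,
        if Gamma src tgt R n (α :: (a :: r).dropLast) then
          ((-1 : B) ^ (n + 1)) * resMinus P (φ (α :: (a :: r).dropLast)) α
            * P.arrO ((a :: r).getLast?)
        else 0

end Maps

section Aux

variable {src tgt : Arr → V} {R : Set (Arr × Arr)}
variable {k B : Type} [Field k] [Ring B] [Algebra k B] [Fintype V] [Fintype Arr]

lemma flatten_map_singleton (l : List Arr) : (l.map fun a => [a]).flatten = l := by
  induction l with
  | nil => simp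
  | cons a t ih => simp [ih]

lemma omegaIdx_map_singleton (l : List Arr) :
    omegaIdx (l.map fun a => [a]) = l := by
  match l with
  | [] => rfl
  | [a] => rfl
  | a :: b :: t =>
    have hne : (b :: t) ≠ ([] : List Arr) := by simp
    show [a].getLast?.toList ++ ((b :: t).map fun a => [a]).dropLast.flatten ++
        (((b :: t).map fun a => [a]).getLast?.getD []).head?.toList = a :: b :: t
    rw [← List.map_dropLast, flatten_map_singleton, List.getLast?_map,
      List.getLast?_eq_getLast hne]
    simp only [Option.map_some, Option.getD_some, List.head?_cons, Option.toList_some,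
      List.getLast?_eq_getLast, List.getLast_singleton]
    show [a] ++ (b :: t).dropLast ++ [(b :: t).getLast hne] = a :: b :: t
    rw [List.append_assoc, List.dropLast_append_getLast hne]
    rfl

lemma omegaU_map_singleton (P : Pres src tgt R k B) (l : List Arr) :
    omegaU P (l.map fun a => [a]) = 1 := by
  match l with
  | [] => rfl
  | a :: t => simp [omegaU, Pres.pbar]

lemma omegaV_map_singleton (P : Pres src tgt R k B) (l : List Arr) :
    omegaV P (l.map fun a => [a]) = 1 := by
  match l with
  | [] => rfl
  | [a] => rfl
  | a :: b :: t =>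
    have hne : (b :: t) ≠ ([] : List Arr) := by simp
    show P.pbar ((((b :: t).map fun a => [a]).getLast?.getD []).tail) = 1
    rw [List.getLast?_map, List.getLast?_eq_getLast hne]
    simp [Pres.pbar]

lemma act_one_one (c : B ⊗[k] B) : act (k := k) (1 : B) (1 : B) c = c := by
  simp [act, LinearMap.mulRight_one, LinearMap.mulLeft_one]

end Aux

/-- The comparison maps between Bardzell's minimal resolution and the
reduced bar-type resolution satisfy `ωₙ ∘ μₙ = id` on `A ⊗ kΓₙ ⊗ A`. -/
theorem stmt6 {V Arr : Type} [Fintype V] [Fintype Arr]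
    (src tgt : Arr → V) (R : Set (Arr × Arr))
    (hR : ∀ p ∈ R, tgt p.1 = src p.2)
    (htri : Triangular src tgt)
    (k B : Type) [Field k] [Ring B] [Algebra k B]
    (P : Pres src tgt R k B)
    (n : ℕ) (x : Mmod src tgt R k B n) :
    omegaMap P n (muMap n x) = x := by
  unfold omegaMap muMap
  set F : {t : List (List Arr) // Tup src tgt R n t} → (B ⊗[k] B) → Mmod src tgt R k B n :=
    fun t c =>
      if h : Gamma src tgt R n (omegaIdx t.1) then
        Finsupp.single ⟨omegaIdx t.1, h⟩ (act (k := k) (omegaU P t.1) (omegaV P t.1) c)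
      else 0 with hF
  have h0 : ∀ t, F t 0 = 0 := by
    intro t; rw [hF]; dsimp only; split_ifs with h <;> simp
  have hadd : ∀ t (c₁ c₂ : B ⊗[k] B), F t (c₁ + c₂) = F t c₁ + F t c₂ := by
    intro t c₁ c₂; rw [hF]; dsimp only
    split_ifs with h <;> simp [map_add, Finsupp.single_add]
  rw [Finsupp.sum_mapDomain_index h0 hadd, hF]
  conv_rhs => rw [← Finsupp.sum_single x]
  apply Finsupp.sum_congr
  intro l _
  dsimp only
  rw [dif_pos (show Gamma src tgt R n (omegaIdx ((l.1).map fun a => [a])) by rw [omegaIdx_map_singleton]; exact l.2)]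
  have h1 : (⟨omegaIdx (l.1.map fun a => [a]), by rw [omegaIdx_map_singleton]; exact l.2⟩ :
      {m : List Arr // Gamma src tgt R n m}) = l := by
    ext1; exact omegaIdx_map_singleton l.1
  rw [h1, omegaU_map_singleton, omegaV_map_singleton, act_one_one]

end StringAlgebras

end
end

section
/- Let A = kQ/I be a triangular string algebra with I quadratic. Let f ∈ Hom_{E^e}(kΓ_n, A) be the basis element corresponding to (α_1⋯α_n, ᾱ_1 p̄), i.e. f(α_1⋯α_n) = ᾱ_1 p̄ and f vanishes on all other elements of Γ_n, where α_1 p ∉ I is a path from s(α_1) to t(α_n). Define f_+ ∈ Hom_{E^e}(kΓ_n, A) by f_+(α_2⋯α_{n+1}) = (−1)^{n+1} \overline{p α_{n+1}} whenever α_2⋯α_{n+1} ∈ Γ_n (for the unique possible arrow α_{n+1}), and f_+ = 0 on all other basis paths. Then f − f_+ = δ^{n-1} h where h ∈ Hom_{E^e}(kΓ_{n-1}, A) is the basis element (α_2⋯α_n, p̄); in particular f − f_+ lies in the image of δ^{n-1}. -/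
open scoped Classical TensorProduct BigOperators

noncomputable section

namespace StringAlgebras

variable {V Arr : Type}

/-- **Lemma 2.1 a.** For a triangular string algebra with quadratic
relations: if `f` is the basis cochain `(α₁⋯αₙ, ᾱ₁p̄)` of type (−), `f₊` its shift
`(α₂⋯α_{n+1}, (-1)^{n+1}\overline{pα_{n+1}})`, and `h` the basis cochain
`(α₂⋯αₙ, p̄)`, then `f - f₊ = δ^{n-1} h` on `Γₙ`; in particular `f - f₊` is a
coboundary. -/
theorem stmt8 {V Arr : Type} [Fintype V] [Fintype Arr]
    (src tgt : Arr → V) (R : Set (Arr × Arr))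
    (hR : ∀ p ∈ R, tgt p.1 = src p.2)
    (htri : Triangular src tgt) (hS2 : S2 src tgt) (hS3 : S3 src tgt R)
    (k B : Type) [Field k] [Ring B] [Algebra k B]
    (P : Pres src tgt R k B)
    (n : ℕ) (hn : 2 ≤ n)
    (l : List Arr) (hl : Gamma src tgt R n l)
    (a1 : Arr) (ha1 : l.head? = some a1)
    (p : List Arr) (hp : p ≠ [])
    (hcomp : Composable src tgt (a1 :: p))
    (hpI : ¬InI R (a1 :: p))
    (hpt : tgtOf tgt p = tgtOf tgt l) :
    ∀ m : List Arr, Gamma src tgt R n m →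
      ((if m = l then P.arrB a1 * P.pbar p else 0) -
        (if Gamma src tgt R n m ∧ m.dropLast = l.tail then
            (-1 : B) ^ (n + 1) * P.pbar (p ++ m.getLast?.toList)
          else 0))
        = coDelta P (fun m' => if m' = l.tail then P.pbar p else 0) m := by
  intro m hm
  have hln : l.length = n := hl.1
  have hmn : m.length = n := hm.1
  obtain ⟨b, t, rfl⟩ : ∃ b t, m = b :: t := by
    cases m with
    | nil => simp at hmn; omega
    | cons b t => exact ⟨b, t, rfl⟩
  obtain ⟨lt, rfl⟩ : ∃ lt, l = a1 :: lt := by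
    cases l with
    | nil => simp at hln; omega
    | cons x xs => simp at ha1; exact ⟨xs, by rw [ha1]⟩
  obtain ⟨q, ps, rfl⟩ : ∃ q ps, p = q :: ps := by
    cases p with
    | nil => exact absurd rfl hp
    | cons q ps => exact ⟨q, ps, rfl⟩
  obtain ⟨a2, lt', rfl⟩ : ∃ a2 lt', lt = a2 :: lt' := by
    cases lt with
    | nil => simp at hln; omega
    | cons x xs => exact ⟨x, xs, rfl⟩
  obtain ⟨ini, a, rfl⟩ : ∃ ini a, t = ini ++ [a] := by
    rcases List.eq_nil_or_concat t with h | ⟨ini, a, h⟩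
    · subst h; simp at hmn; omega
    · exact ⟨ini, a, by simpa using h⟩
  -- basic facts
  have hbig : InI R [a1, q] → False := by
    intro ⟨x, y, hxy, hinf⟩
    apply hpI
    have heq : [x, y] = [a1, q] := hinf.sublist.eq_of_length (by simp)
    injection heq with h1 h2
    injection h2 with h2 _
    subst h1; subst h2
    exact ⟨x, y, hxy, [], ps, by simp⟩
  have ha1q : (a1, q) ∉ R := fun h => hbig ⟨a1, q, h, List.infix_rfl⟩
  have ha1a2 : (a1, a2) ∈ R := hl.2.2 (a1, a2) (by simp [List.zip])
  have hta1q : tgt a1 = src q := (List.isChain_cons_cons.mp hcomp).1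
  -- first terms match
  have h1 : (if (b :: (ini ++ [a])) = a1 :: a2 :: lt' then P.arrB a1 * P.pbar (q :: ps) else 0)
      = P.arrB b * (if (ini ++ [a]) = a2 :: lt' then P.pbar (q :: ps) else 0) := by
    by_cases ht : (ini ++ [a]) = a2 :: lt'
    · by_cases hb : b = a1
      · subst hb; simp [ht]
      · have hne : (b :: (ini ++ [a])) ≠ a1 :: a2 :: lt' := by
          intro h; injection h with h1 _; exact hb h1
        have hba2 : (b, a2) ∈ R := by
          apply hm.2.2 (b, a2)
          rw [ht]; simp [List.zip]
        have hbq : (b, q) ∈ R := by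
          by_contra hnot
          exact hb (hS3.2 q b a1 ((hR _ hba2).trans (hR _ ha1a2).symm ▸ hta1q) hta1q hnot ha1q)
        simp only [if_pos ht, if_neg hne]
        have hz : P.arrB b * P.pbar (q :: ps) = 0 := by
          show P.arrB b * (List.map P.arrB (q :: ps)).prod = 0
          rw [List.map_cons, List.prod_cons, ← mul_assoc, P.rel_mul b q hbq, zero_mul]
        rw [hz]
    · have hne : (b :: (ini ++ [a])) ≠ a1 :: a2 :: lt' := by
        intro h; apply ht; exact (List.cons.injEq .. ▸ h).2
      simp [hne, ht]
  -- unfold coDelta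
  have hlast : (b :: (ini ++ [a])).getLast? = some a := by
    rw [List.getLast?_eq_getLast (l := b :: (ini ++ [a])) (by simp)]
    simp [List.getLast_cons, List.getLast_append]
  have hdl : (b :: (ini ++ [a])).dropLast = b :: ini := by
    simp [List.dropLast_cons_of_ne_nil, List.dropLast_concat]
  have hpbapp : P.pbar (q :: ps ++ [a]) = P.pbar (q :: ps) * P.arrB a := by
    simp [Pres.pbar, mul_assoc]
  simp only [coDelta, List.head?_cons, List.tail_cons, hlast, hdl, Pres.arrO, Option.map_some,
    Option.getD_some, Option.toList_some, hm, true_and, hmn]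
  rw [h1, hpbapp]
  by_cases hdlt : (b :: ini) = a2 :: lt'
  · simp only [if_pos hdlt, pow_succ]
    noncomm_ring
    exact add_comm _ _
  · simp [hdlt]
    split_ifs <;> simp_all

end StringAlgebras

end
end

section
/- Let A = kQ/I be a triangular quadratic monomial algebra whose bound quiver satisfies condition (S3). Define the cup product of cochains f ∈ Hom_{E^e}(kΓ_n, A), g ∈ Hom_{E^e}(kΓ_m, A) by (f ∪ g)(α_1⋯α_n β_1⋯β_m) = f(α_1⋯α_n) · g(β_1⋯β_m) for α_1⋯α_nβ_1⋯β_m ∈ Γ_{n+m}. Then δ^{n+m}(f ∪ g) = δ^n f ∪ g + (−1)^n f ∪ δ^m g; consequently the cup product of cocycles is a cocycle and ∪ descends to cohomology. -/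
open scoped Classical TensorProduct BigOperators

noncomputable section

namespace StringAlgebras

variable {V Arr : Type}

section Aux

variable {V Arr : Type}

private lemma pairs_sub {α : Type} {l₁ l₂ : List α} (h : l₁ <:+: l₂) :
    ∀ p ∈ l₁.zip l₁.tail, p ∈ l₂.zip l₂.tail := by
  obtain ⟨s, t, rfl⟩ := h
  intro p hp
  rw [List.mem_iff_getElem?] at hp ⊢
  obtain ⟨i, hi⟩ := hp
  simp only [List.getElem?_zip_eq_some, List.getElem?_tail] at hi
  refine ⟨s.length + i, ?_⟩
  simp only [List.getElem?_zip_eq_some, List.getElem?_tail]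
  obtain ⟨h1, -⟩ := List.getElem?_eq_some_iff.mp hi.2
  constructor
  · rw [List.getElem?_append_left (by simp; omega),
      List.getElem?_append_right (by omega)]
    simpa using hi.1
  · rw [List.getElem?_append_left (by simp; omega),
      List.getElem?_append_right (by omega)]
    have h2 : s.length + i + 1 - s.length = i + 1 := by omega
    rw [h2]
    exact hi.2

private lemma gamma_take {src tgt : Arr → V} {R : Set (Arr × Arr)} {N j : ℕ} {l : List Arr}
    (h : Gamma src tgt R N l) (hj : j ≤ N) : Gamma src tgt R j (l.take j) := by
  refine ⟨by simp [h.1]; omega, List.IsChain.infix h.2.1 (List.take_prefix j l).isInfix, ?_⟩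
  exact fun p hp => h.2.2 p (pairs_sub (List.take_prefix j l).isInfix p hp)

private lemma gamma_drop {src tgt : Arr → V} {R : Set (Arr × Arr)} {N j : ℕ} {l : List Arr}
    (h : Gamma src tgt R N l) : Gamma src tgt R (N - j) (l.drop j) := by
  refine ⟨by simp [h.1], List.IsChain.infix h.2.1 (List.drop_suffix j l).isInfix, ?_⟩
  exact fun p hp => h.2.2 p (pairs_sub (List.drop_suffix j l).isInfix p hp)

private lemma tail_take' {α : Type} (l : List α) (n : ℕ) :
    (l.take (n + 1)).tail = l.tail.take n := by
  apply List.ext_getElem?; intro i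
  simp only [List.getElem?_tail, List.getElem?_take]
  split_ifs <;> first | rfl | omega

private lemma tail_drop' {α : Type} (l : List α) (n : ℕ) :
    l.tail.drop n = l.drop (n + 1) := by
  apply List.ext_getElem?; intro i
  simp only [List.getElem?_tail, List.getElem?_drop]
  congr 1
  omega

private lemma dropLast_drop' {α : Type} (l : List α) (n : ℕ) :
    (l.drop n).dropLast = l.dropLast.drop n := by
  apply List.ext_getElem?; intro i
  simp only [List.getElem?_dropLast, List.getElem?_drop, List.length_drop]
  split_ifs <;> first | rfl | omega

private lemma take_dropLast' {α : Type} (l : List α) (n : ℕ) (h : n + 1 ≤ l.length) :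
    l.dropLast.take n = l.take n := by
  apply List.ext_getElem?; intro i
  simp only [List.getElem?_take, List.getElem?_dropLast]
  split_ifs <;> first | rfl | omega

end Aux

/-- Graded Leibniz rule for the cup product on the minimal-resolution
cochain complex: `δ^{n+m}(f ∪ g) = δⁿf ∪ g + (-1)ⁿ f ∪ δᵐg` on `Γ_{n+m+1}`;
consequently the cup product of cocycles is a cocycle. -/
theorem stmt9 {V Arr : Type} [Fintype V] [Fintype Arr]
    (src tgt : Arr → V) (R : Set (Arr × Arr))
    (hR : ∀ p ∈ R, tgt p.1 = src p.2)
    (htri : Triangular src tgt)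
    (k B : Type) [Field k] [Ring B] [Algebra k B]
    (P : Pres src tgt R k B)
    (n m : ℕ) (hn : 1 ≤ n) (hm : 1 ≤ m)
    (φ ψ : List Arr → B) :
    (∀ l : List Arr, Gamma src tgt R (n + m + 1) l →
        coDelta P (cup n φ ψ) l
          = cup (n + 1) (coDelta P φ) ψ l + (-1 : B) ^ n * cup n φ (coDelta P ψ) l) ∧
    ((∀ l : List Arr, Gamma src tgt R (n + 1) l → coDelta P φ l = 0) →
      (∀ l : List Arr, Gamma src tgt R (m + 1) l → coDelta P ψ l = 0) →
      ∀ l : List Arr, Gamma src tgt R (n + m + 1) l → coDelta P (cup n φ ψ) l = 0) := by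
  have hL : ∀ l : List Arr, Gamma src tgt R (n + m + 1) l →
      coDelta P (cup n φ ψ) l
        = cup (n + 1) (coDelta P φ) ψ l + (-1 : B) ^ n * cup n φ (coDelta P ψ) l := by
    intro l hl
    have hlen : l.length = n + m + 1 := hl.1
    simp only [coDelta, cup]
    have e1 : (l.take (n + 1)).head? = l.head? := by
      rw [List.head?_take, if_neg (by omega)]
    have e2 : (l.take (n + 1)).tail = l.tail.take n := tail_take' l n
    have e3 : l.tail.drop n = l.drop (n + 1) := tail_drop' l n
    have e4 : (l.take (n + 1)).length = n + 1 := by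
      rw [List.length_take, hlen]; omega
    have e5 : (l.take (n + 1)).dropLast = l.take n := by
      rw [List.dropLast_take (by omega), Nat.add_sub_cancel]
    have e6 : (l.take (n + 1)).getLast? = l[n]? := by
      have hx : l[n]? = some l[n] := List.getElem?_eq_getElem (show n < l.length by omega)
      rw [List.getLast?_take, if_neg (by omega), Nat.add_sub_cancel, hx]
      simp
    have e7 : (l.drop n).head? = l[n]? := List.head?_drop (l := l) (i := n)
    have e8 : (l.drop n).tail = l.drop (n + 1) := List.tail_drop (l := l) (i := n)
    have e9 : (l.drop n).length = m + 1 := by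
      rw [List.length_drop, hlen]; omega
    have e10 : (l.drop n).dropLast = l.dropLast.drop n := dropLast_drop' l n
    have e11 : (l.drop n).getLast? = l.getLast? := by
      rw [List.getLast?_drop, if_neg (by omega)]
    have e12 : l.dropLast.take n = l.take n := take_dropLast' l n (by omega)
    rw [e1, e2, e3, e4, e5, e6, e7, e8, e9, e10, e11, e12, hlen]
    have p1 : (-1 : B) ^ (n + m + 1) = (-1 : B) ^ n * (-1 : B) ^ m * (-1 : B) := by
      rw [pow_add, pow_add, pow_one]
    have p2 : (-1 : B) ^ (n + 1) = (-1 : B) ^ n * (-1 : B) := by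
      rw [pow_add, pow_one]
    have p3 : (-1 : B) ^ (m + 1) = (-1 : B) ^ m * (-1 : B) := by
      rw [pow_add, pow_one]
    rw [p1, p2, p3]
    rcases neg_one_pow_eq_or B n with hn1 | hn1 <;>
      rcases neg_one_pow_eq_or B m with hm1 | hm1 <;>
      rw [hn1, hm1] <;> noncomm_ring
  refine ⟨hL, fun hφ hψ l hl => ?_⟩
  have h1 : Gamma src tgt R (n + 1) (l.take (n + 1)) :=
    gamma_take hl (by omega)
  have h2 : Gamma src tgt R (m + 1) (l.drop n) := by
    have := gamma_drop (j := n) hl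
    rwa [show n + m + 1 - n = m + 1 by omega] at this
  rw [hL l hl]
  simp only [cup]
  rw [hφ _ h1, hψ _ h2, zero_mul, mul_zero, mul_zero, add_zero]

end StringAlgebras

end
end

section
/- Let A = kQ/I be a triangular gentle algebra. For n, m > 1, every composition product φ ∘_i ψ of cochains φ ∈ Hom_{E^e}(kΓ_n, A), ψ ∈ Hom_{E^e}(kΓ_m, A) with 2 ≤ i ≤ n is the zero cochain. Consequently the Gerstenhaber bracket satisfies [HH^n(A), HH^m(A)] = 0 for n, m > 1. -/
open scoped Classical TensorProduct BigOperators

noncomputable section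

namespace StringAlgebras

variable {V Arr : Type}

section AuxProof

variable {src tgt : Arr → V} {R : Set (Arr × Arr)}
variable {k B : Type} [Field k] [Ring B] [Algebra k B] [Fintype V] [Fintype Arr]

lemma getElem_idx {l : List Arr} {a b : ℕ} (h : a = b) (ha : a < l.length) :
    l[a] = l[b]'(h ▸ ha) := by subst h; rfl

lemma comp_get {l : List Arr} (hc : Composable src tgt l) {j : ℕ} (hj : j + 1 < l.length) :
    tgt (l[j]'(by omega)) = src l[j + 1] := by
  unfold Composable List.Chain' at hc
  rw [List.isChain_iff_getElem] at hc
  simpa using hc j (by omega)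

lemma pair_mem {l : List Arr} (hl : ∀ p ∈ l.zip l.tail, p ∈ R) {j : ℕ}
    (hj : j + 1 < l.length) : ((l[j]'(by omega)), l[j + 1]) ∈ R := by
  apply hl
  have h1 : j < (l.zip l.tail).length := by
    simp only [List.length_zip, List.length_tail]; omega
  have h2 : (l.zip l.tail)[j] = ((l[j]'(by omega)), l[j + 1]) := by
    rw [List.getElem_zip, List.getElem_tail]
  rw [← h2]
  exact List.getElem_mem _

lemma tri_get (htri : Triangular src tgt) {l : List Arr} (hc : Composable src tgt l)
    {a b : ℕ} (hab : a ≤ b) (hb : b < l.length) :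
    src (l[a]'(by omega)) ≠ tgt (l[b]'hb) := by
  set p := (l.drop a).take (b - a + 1) with hpdef
  have hplen : p.length = b - a + 1 := by
    simp only [hpdef, List.length_take, List.length_drop]; omega
  have hpne : p ≠ [] := by
    intro h; rw [h] at hplen; simp at hplen
  have hget : ∀ (j : ℕ) (hj : j < p.length), p[j] = l[a + j]'(by omega) := by
    intro j hj
    simp only [hpdef, List.getElem_take, List.getElem_drop]
  have hpc : Composable src tgt p := by
    unfold Composable List.Chain' at hc ⊢
    rw [List.isChain_iff_getElem] at hc ⊢
    intro j hj
    rw [hget j (by omega), hget (j + 1) (by omega)]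
    have := hc (a + j) (by omega)
    simpa [Nat.add_assoc] using this
  have hne := htri p ⟨hpne, hpc⟩
  rw [srcOf, tgtOf, List.head?_eq_head hpne, List.getLast?_eq_getLast hpne,
    p.head_eq_getElem, p.getLast_eq_getElem, hget 0 (by omega),
    hget (p.length - 1) (by omega)] at hne
  simp only [Option.map_some] at hne
  intro h
  apply hne
  have h1 : a + 0 = a := by omega
  have h2 : a + (p.length - 1) = b := by omega
  rw [getElem_idx h1, getElem_idx h2, h]

lemma arrB_mul_e (P : Pres src tgt R k B) (a : Arr) (w : V) :
    P.arrB a * P.e w = if tgt a = w then P.arrB a else 0 := by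
  split_ifs with h
  · rw [← h, P.mul_tgt]
  · rw [← P.mul_tgt a, mul_assoc, P.orth _ _ h, mul_zero]

lemma e_mul_arrB (P : Pres src tgt R k B) (a : Arr) (u : V) :
    P.e u * P.arrB a = if src a = u then P.arrB a else 0 := by
  split_ifs with h
  · rw [← h, P.src_mul]
  · rw [← P.src_mul a, ← mul_assoc, P.orth _ _ (Ne.symm h), zero_mul]

lemma pbar_append (P : Pres src tgt R k B) (u v : List Arr) :
    P.pbar (u ++ v) = P.pbar u * P.pbar v := by
  simp [Pres.pbar]

lemma pbar_mul_e (P : Pres src tgt R k B) {p : List Arr} (hp : p ≠ []) (w : V) :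
    P.pbar p * P.e w = if tgt (p.getLast hp) = w then P.pbar p else 0 := by
  have hsingle : P.pbar [p.getLast hp] = P.arrB (p.getLast hp) := by
    simp [Pres.pbar]
  have hdec : P.pbar p = P.pbar p.dropLast * P.arrB (p.getLast hp) := by
    conv_lhs => rw [← List.dropLast_append_getLast hp]
    rw [pbar_append, hsingle]
  rw [hdec, mul_assoc, arrB_mul_e]
  split_ifs with h
  · rfl
  · rw [mul_zero]

lemma e_mul_pbar (P : Pres src tgt R k B) {p : List Arr} (hp : p ≠ []) (u : V) :
    P.e u * P.pbar p = if src (p.head hp) = u then P.pbar p else 0 := by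
  have hdec : P.pbar p = P.arrB (p.head hp) * P.pbar p.tail := by
    cases p with
    | nil => exact absurd rfl hp
    | cons a t => simp [Pres.pbar]
  rw [hdec, ← mul_assoc, e_mul_arrB]
  split_ifs with h
  · rfl
  · rw [zero_mul]

lemma repr_right (P : Pres src tgt R k B) {x : B} {w : V} (hx : x * P.e w = x)
    (q : {l' : List Arr // IsPath src tgt l' ∧ ¬InI R l'})
    (hq : tgt (q.1.getLast q.2.1.1) ≠ w) :
    P.bas.repr x (Sum.inr q) = 0 := by
  let f : B →ₗ[k] k :=
    (Finsupp.lapply (Sum.inr q : V ⊕ _)).comp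
      ((P.bas.repr.toLinearMap).comp (LinearMap.mulRight k (P.e w)))
  have hf : f = 0 := by
    apply P.bas.ext
    rintro (v | p) <;>
      simp only [f, LinearMap.comp_apply, LinearMap.mulRight_apply,
        LinearEquiv.coe_toLinearMap, LinearMap.zero_apply]
    · rw [P.bas_inl]
      by_cases hv : v = w
      · subst hv
        rw [P.idem, ← P.bas_inl, P.bas.repr_self]
        exact Finsupp.single_eq_of_ne (by simp)
      · rw [P.orth _ _ hv]; simp
    · rw [P.bas_inr]
      have hpb : (p.1.map P.arrB).prod = P.pbar p.1 := rfl
      rw [hpb, pbar_mul_e P p.2.1.1]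
      split_ifs with h
      · by_cases hpq : p = q
        · subst hpq; exact absurd h hq
        · rw [← hpb, ← P.bas_inr, P.bas.repr_self]
          exact Finsupp.single_eq_of_ne (by simpa using Ne.symm hpq)
      · simp
  have hfx : f x = 0 := by rw [hf]; rfl
  rw [← hx]
  simpa [f] using hfx

lemma repr_left (P : Pres src tgt R k B) {x : B} {u : V} (hx : P.e u * x = x)
    (q : {l' : List Arr // IsPath src tgt l' ∧ ¬InI R l'})
    (hq : src (q.1.head q.2.1.1) ≠ u) :
    P.bas.repr x (Sum.inr q) = 0 := by
  let f : B →ₗ[k] k :=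
    (Finsupp.lapply (Sum.inr q : V ⊕ _)).comp
      ((P.bas.repr.toLinearMap).comp (LinearMap.mulLeft k (P.e u)))
  have hf : f = 0 := by
    apply P.bas.ext
    rintro (v | p) <;>
      simp only [f, LinearMap.comp_apply, LinearMap.mulLeft_apply,
        LinearEquiv.coe_toLinearMap, LinearMap.zero_apply]
    · rw [P.bas_inl]
      by_cases hv : u = v
      · subst hv
        rw [P.idem, ← P.bas_inl, P.bas.repr_self]
        exact Finsupp.single_eq_of_ne (by simp)
      · rw [P.orth _ _ hv]; simp
    · rw [P.bas_inr]
      have hpb : (p.1.map P.arrB).prod = P.pbar p.1 := rfl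
      rw [hpb, e_mul_pbar P p.2.1.1]
      split_ifs with h
      · by_cases hpq : p = q
        · subst hpq; exact absurd h hq
        · rw [← hpb, ← P.bas_inr, P.bas.repr_self]
          exact Finsupp.single_eq_of_ne (by simpa using Ne.symm hpq)
      · simp
  have hfx : f x = 0 := by rw [hf]; rfl
  rw [← hx]
  simpa [f] using hfx

lemma circ_zero (htri : Triangular src tgt) (hG1 : G1 R)
    (P : Pres src tgt R k B) {n m : ℕ} (hn : 1 < n) (hm : 1 < m)
    (φ ψ : List Arr → B)
    (hψcor : ∀ (a : Arr) (r : List Arr),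
      ψ (a :: r) = P.e (src a) * ψ (a :: r) *
        P.e (tgt ((a :: r).getLast (List.cons_ne_nil a r))))
    {i : ℕ} (hi1 : 1 ≤ i) (hi2 : i ≤ n)
    {l : List Arr} (hl : Gamma src tgt R (n + m - 1) l) :
    circ P i n m φ ψ l = 0 := by
  obtain ⟨hlen, hcomp, hpairs⟩ := hl
  rw [circ, Finsupp.sum]
  apply Finset.sum_eq_zero
  rintro (v | q) hj
  · simp
  · simp only [Sum.elim_inr]
    by_cases hg : Gamma src tgt R n (l.take (i - 1) ++ q.1 ++ l.drop (i - 1 + m))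
    · rw [if_pos hg]
      -- the inserted path has length 1
      have hq1 : q.1.length = 1 := by
        have hLl := hg.1
        simp only [List.length_append, List.length_take, List.length_drop] at hLl
        omega
      obtain ⟨β, hβ⟩ := List.length_eq_one_iff.mp hq1
      -- the argument of ψ
      set arg := (l.drop (i - 1)).take m with hargdef
      have harglen : arg.length = m := by
        simp only [hargdef, List.length_take, List.length_drop]; omega
      have hargne : arg ≠ [] := by
        intro h; rw [h] at harglen; simp at harglen; omega
      have hargget : ∀ (j : ℕ) (hj : j < arg.length),
          arg[j] = l[i - 1 + j]'(by omega) := by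
        intro j hj
        simp only [hargdef, List.getElem_take, List.getElem_drop]
      -- head/last of arg
      set a := arg.head hargne with hadef
      set r := arg.tail with hrdef
      have har : a :: r = arg := List.cons_head_tail hargne
      have hlast : (a :: r).getLast (List.cons_ne_nil a r) = arg.getLast hargne := by
        have h1 := List.getLast?_eq_getLast (List.cons_ne_nil a r)
        have h2 := List.getLast?_eq_getLast hargne
        have h3 : (a :: r).getLast? = arg.getLast? := by rw [har]
        rw [h1, h2] at h3
        exact Option.some.inj h3
      have hlastval : arg.getLast hargne = l[i - 1 + (m - 1)]'(by omega) := by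
        rw [arg.getLast_eq_getElem, hargget (arg.length - 1) (by omega),
          getElem_idx (show i - 1 + (arg.length - 1) = i - 1 + (m - 1) by omega)]
      have haval : a = l[i - 1]'(by omega) := by
        rw [hadef, arg.head_eq_getElem, hargget 0 (by omega),
          getElem_idx (show i - 1 + 0 = i - 1 by omega)]
      have hcor := hψcor a r
      rw [hlast, hlastval] at hcor
      rw [har] at hcor
      -- split on i = 1 or i ≥ 2
      suffices hzero : P.bas.repr (ψ arg) (Sum.inr q) = 0 by
        rw [hzero, zero_smul]
      by_cases hii : 2 ≤ i
      · -- pin down β = l[i-1] using G1.1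
        rw [hβ] at hg
        have hpair1 : ((l[i - 2]'(by omega)), β) ∈ R := by
          have hp := pair_mem hg.2.2 (j := i - 2)
            (by simp only [List.length_append, List.length_take, List.length_drop,
                  List.length_singleton]; omega)
          have e1 : (l.take (i - 1) ++ [β] ++ l.drop (i - 1 + m))[i - 2]'(by
              simp only [List.length_append, List.length_take, List.length_drop,
                List.length_singleton]; omega) = l[i - 2]'(by omega) := by
            rw [List.getElem_append_left (by
                simp only [List.length_append, List.length_take, List.length_singleton]
                omega),
              List.getElem_append_left (by simp only [List.length_take]; omega),
              List.getElem_take]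
          have e2 : (l.take (i - 1) ++ [β] ++ l.drop (i - 1 + m))[i - 2 + 1]'(by
              simp only [List.length_append, List.length_take, List.length_drop,
                List.length_singleton]; omega) = β := by
            rw [List.getElem_append_left (by
                simp only [List.length_append, List.length_take, List.length_singleton]
                omega),
              List.getElem_append_right (by simp only [List.length_take]; omega),
              List.getElem_singleton]
          rw [e1, e2] at hp
          exact hp
        have hpair2 : ((l[i - 2]'(by omega)), l[i - 1]'(by omega)) ∈ R := by
          have hp := pair_mem hpairs (j := i - 2) (by omega)
          rwa [getElem_idx (show i - 2 + 1 = i - 1 by omega)] at hp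
        have hβval : β = l[i - 1]'(by omega) := hG1.1 _ _ _ hpair1 hpair2
        -- coefficient of [l[i-1]] in ψ arg vanishes by right corner + triangularity
        have hx : ψ arg * P.e (tgt (l[i - 1 + (m - 1)]'(by omega))) = ψ arg := by
          conv_lhs => rw [hcor]
          rw [mul_assoc, P.idem, ← hcor]
        apply repr_right P hx
        have hqlast : q.1.getLast q.2.1.1 = β := by
          have h1 := List.getLast?_eq_getLast q.2.1.1
          have h2 : q.1.getLast? = some β := by rw [hβ]; rfl
          rw [h1] at h2
          exact Option.some.inj h2
        rw [hqlast, hβval]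
        have hcg : tgt (l[i - 1]'(by omega)) = src (l[i]'(by omega)) := by
          have := comp_get hcomp (j := i - 1) (by omega)
          rwa [getElem_idx (show i - 1 + 1 = i by omega)] at this
        rw [hcg]
        exact tri_get htri hcomp (show i ≤ i - 1 + (m - 1) by omega) (by omega)
      · -- i = 1 : pin down β = l[m-1] using G1.2
        have hi : i = 1 := by omega
        subst hi
        rw [hβ] at hg
        simp only [Nat.sub_self, List.take_zero, List.nil_append, Nat.zero_add] at hg
        have hpair1 : (β, l[m]'(by omega)) ∈ R := by
          have hp := pair_mem hg.2.2 (j := 0)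
            (by simp only [List.length_append, List.length_drop, List.length_singleton]
                omega)
          have e1 : ([β] ++ l.drop m)[0]'(by
              simp only [List.length_append, List.length_drop, List.length_singleton]
              omega) = β := by
            rw [List.getElem_append_left (by simp), List.getElem_singleton]
          have e2 : ([β] ++ l.drop m)[0 + 1]'(by
              simp only [List.length_append, List.length_drop, List.length_singleton]
              omega) = l[m]'(by omega) := by
            rw [List.getElem_append_right (by simp), List.getElem_drop]
            exact getElem_idx (by simp) _
          rw [e1, e2] at hp
          exact hp
        have hpair2 : ((l[m - 1]'(by omega)), l[m]'(by omega)) ∈ R := by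
          have hp := pair_mem hpairs (j := m - 1) (by omega)
          rwa [getElem_idx (show m - 1 + 1 = m by omega)] at hp
        have hβval : β = l[m - 1]'(by omega) := hG1.2 _ _ _ hpair1 hpair2
        -- coefficient of [l[m-1]] in ψ arg vanishes by left corner + triangularity
        have haval' : a = l[0]'(by omega) := by
          rw [haval]
        rw [haval'] at hcor
        have hx : P.e (src (l[0]'(by omega))) * ψ arg = ψ arg := by
          conv_lhs => rw [hcor]
          rw [← mul_assoc, ← mul_assoc, P.idem, ← hcor]
        apply repr_left P hx
        have hqhead : q.1.head q.2.1.1 = β := by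
          have h1 := List.head?_eq_head (l := q.1) q.2.1.1
          have h2 : q.1.head? = some β := by rw [hβ]; rfl
          rw [h1] at h2
          exact Option.some.inj h2
        rw [hqhead, hβval]
        have hcg : src (l[m - 1]'(by omega)) = tgt (l[m - 2]'(by omega)) := by
          have := comp_get hcomp (j := m - 2) (by omega)
          rw [getElem_idx (show m - 2 + 1 = m - 1 by omega)] at this
          exact this.symm
        rw [hcg]
        exact fun h =>
          tri_get htri hcomp (show 0 ≤ m - 2 by omega) (by omega) h.symm
    · rw [if_neg hg]

end AuxProof

/-- **Theorem 3.2.** For a triangular gentle algebra and `n, m > 1`: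
every composition product `φ ∘ᵢ ψ` (for `2 ≤ i ≤ n`) of cochains of degrees `n`
and `m` vanishes on `Γ_{n+m-1}`, and consequently the Gerstenhaber bracket
`[φ, ψ]` of cocycles is a coboundary: `[HHⁿ(A), HHᵐ(A)] = 0`. -/
theorem stmt11 {V Arr : Type} [Fintype V] [Fintype Arr]
    (src tgt : Arr → V) (R : Set (Arr × Arr))
    (hR : ∀ p ∈ R, tgt p.1 = src p.2)
    (htri : Triangular src tgt) (hS2 : S2 src tgt) (hS3 : S3 src tgt R) (hG1 : G1 R)
    (k B : Type) [Field k] [Ring B] [Algebra k B]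
    (P : Pres src tgt R k B)
    (n m : ℕ) (hn : 1 < n) (hm : 1 < m)
    (φ ψ : List Arr → B)
    (hφsupp : ∀ l : List Arr, ¬Gamma src tgt R n l → φ l = 0)
    (hψsupp : ∀ l : List Arr, ¬Gamma src tgt R m l → ψ l = 0)
    (hφcor : ∀ (a : Arr) (r : List Arr),
      φ (a :: r) = P.e (src a) * φ (a :: r) * P.e (tgt ((a :: r).getLast (List.cons_ne_nil a r))))
    (hψcor : ∀ (a : Arr) (r : List Arr),
      ψ (a :: r) = P.e (src a) * ψ (a :: r) * P.e (tgt ((a :: r).getLast (List.cons_ne_nil a r)))) :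
    (∀ i : ℕ, 2 ≤ i → i ≤ n →
        ∀ l : List Arr, Gamma src tgt R (n + m - 1) l → circ P i n m φ ψ l = 0) ∧
    (∃ h : List Arr → B,
        ∀ l : List Arr, Gamma src tgt R (n + m - 1) l →
          bracket P n m φ ψ l = coDelta P h l) := by
  constructor
  · intro i hi2 hin l hl
    exact circ_zero htri hG1 P hn hm φ ψ hψcor (le_trans one_le_two hi2) hin hl
  · refine ⟨fun _ => 0, fun l hl => ?_⟩
    have hl' : Gamma src tgt R (m + n - 1) l := by rwa [Nat.add_comm]
    rw [bracket, compProd, compProd,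
      Finset.sum_eq_zero (fun i hi => by
        rw [circ_zero htri hG1 P hn hm φ ψ hψcor (Finset.mem_Icc.mp hi).1
          (Finset.mem_Icc.mp hi).2 hl, mul_zero]),
      Finset.sum_eq_zero (fun i hi => by
        rw [circ_zero htri hG1 P hm hn ψ φ hφcor (Finset.mem_Icc.mp hi).1
          (Finset.mem_Icc.mp hi).2 hl', mul_zero])]
    simp [coDelta]


end StringAlgebras

end
end

section
/- Let A = kQ/I be a triangular quadratic monomial algebra, n > 1, and let f ∈ Hom_{E^e}(kΓ_n, A) be the basis element corresponding to (α_1⋯α_n, p̄). Define g ∈ Hom_{E^e}(kΓ_1, A) = Hom_{E^e}(kQ_1, A) by g(α_1) = ᾱ_1 and g(γ) = 0 for γ ≠ α_1. Then the composition product satisfies f ∘ g = f ∘_1 g = f and g ∘ f = 0, so that [f, g] = f. Hence [HH^n(A), HH^1(A)] = HH^n(A) for n > 1. -/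
open scoped Classical TensorProduct BigOperators

noncomputable section

namespace StringAlgebras

variable {V Arr : Type}

section Aux

theorem no_repeat_aux {src tgt : Arr → V} (htri : Triangular src tgt) {l : List Arr}
    (hcomp : Composable src tgt l) {a : Arr} (ha : l.head? = some a)
    {j : ℕ} (hj1 : 1 ≤ j) (hj : j < l.length) (haj : l[j] = a) : False := by
  have hlen : (l.take j).length = j := by simp [Nat.le_of_lt hj]
  have hne : l.take j ≠ [] := by
    intro h; rw [h] at hlen; simp at hlen; omega
  have hchain : Composable src tgt (l.take j) := List.IsChain.take hcomp j
  have hhead : (l.take j).head? = some a := by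
    rw [show (l.take j).head? = l.head? from ?_]; exact ha
    cases l with
    | nil => simp at hj
    | cons x xs => cases j with
      | zero => omega
      | succ j' => simp
  have hlast : (l.take j).getLast? = some l[j-1] := by
    rw [List.getLast?_eq_getElem?]
    have h1 : j - 1 < (l.take j).length := by omega
    rw [show (l.take j).length - 1 = j - 1 by omega, List.getElem?_eq_getElem h1]
    congr 1
    exact List.getElem_take
  have hrel : tgt l[j-1] = src l[j] := by
    have := List.isChain_iff_getElem.mp hcomp (j-1) (by omega)
    simpa [List.get_eq_getElem, Nat.sub_add_cancel hj1] using this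
  exact htri (l.take j) ⟨hne, hchain⟩ (by
    rw [srcOf, tgtOf, hhead, hlast]
    simp [hrel, haj])

variable {src tgt : Arr → V} {R : Set (Arr × Arr)}
variable {k B : Type} [Field k] [Ring B] [Algebra k B] [Fintype V] [Fintype Arr]

theorem circ_eq_zero_of_val_zero (P : Pres src tgt R k B) {i n m : ℕ}
    {φ ψ : List Arr → B} {l : List Arr} (h : ψ ((l.drop (i - 1)).take m) = 0) :
    circ P i n m φ ψ l = 0 := by
  simp [circ, h]

theorem repr_pbar (P : Pres src tgt R k B)
    (q : {l' : List Arr // IsPath src tgt l' ∧ ¬InI R l'}) :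
    P.bas.repr (P.pbar q.1) = Finsupp.single (Sum.inr q) 1 := by
  rw [show P.pbar q.1 = P.bas (Sum.inr q) from (P.bas_inr q).symm, Module.Basis.repr_self]

theorem circ_pbar (P : Pres src tgt R k B) {i n m : ℕ} {φ ψ : List Arr → B} {l : List Arr}
    (q : {l' : List Arr // IsPath src tgt l' ∧ ¬InI R l'})
    (h : ψ ((l.drop (i - 1)).take m) = P.pbar q.1) :
    circ P i n m φ ψ l =
      if Gamma src tgt R n (l.take (i - 1) ++ q.1 ++ l.drop (i - 1 + m)) then
        φ (l.take (i - 1) ++ q.1 ++ l.drop (i - 1 + m))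
      else 0 := by
  rw [circ, h, repr_pbar]
  rw [Finsupp.sum_single_index]
  · simp only [Sum.elim_inr, one_smul]
  · simp

theorem single_arrow_basis_index (a : Arr) :
    IsPath src tgt [a] ∧ ¬InI R [a] := by
  refine ⟨⟨by simp, List.isChain_singleton a⟩, ?_⟩
  rintro ⟨x, y, -, hinf⟩
  have := hinf.length_le
  simp at this

theorem pbar_single (P : Pres src tgt R k B) (a : Arr) : P.pbar [a] = P.arrB a := by
  simp [Pres.pbar]

end Aux

/-- **Proposition 3.5.** For a triangular quadratic monomial algebra
and `n > 1`: if `f` is the basis cochain `(α₁⋯αₙ, p̄)` and `g ∈ C¹` sends `α₁` to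
`ᾱ₁` and every other arrow to `0`, then `f ∘ g = f ∘₁ g = f` and `g ∘ f = 0` on the
relevant `Γ`'s, so `[f, g] = f`; whence `[HHⁿ(A), HH¹(A)] = HHⁿ(A)`. -/
theorem stmt12 {V Arr : Type} [Fintype V] [Fintype Arr]
    (src tgt : Arr → V) (R : Set (Arr × Arr))
    (hR : ∀ p ∈ R, tgt p.1 = src p.2)
    (htri : Triangular src tgt)
    (k B : Type) [Field k] [Ring B] [Algebra k B]
    (P : Pres src tgt R k B)
    (n : ℕ) (hn : 1 < n)
    (l : List Arr) (hl : Gamma src tgt R n l)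
    (a : Arr) (ha : l.head? = some a)
    (p : List Arr) (hpath : IsPath src tgt p) (hpI : ¬InI R p)
    (hsrc : srcOf src p = srcOf src l) (htgt : tgtOf tgt p = tgtOf tgt l) :
    let f : List Arr → B := fun m' => if m' = l then P.pbar p else 0
    let g : List Arr → B := fun m' => if m' = [a] then P.arrB a else 0
    (∀ m' : List Arr, Gamma src tgt R n m' → circ P 1 n 1 f g m' = f m') ∧
    (∀ i : ℕ, 2 ≤ i → i ≤ n →
        ∀ m' : List Arr, Gamma src tgt R n m' → circ P i n 1 f g m' = 0) ∧
    (∀ m' : List Arr, Gamma src tgt R 1 m' → circ P 1 1 n g f m' = 0) ∧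
    (∀ m' : List Arr, Gamma src tgt R n m' → bracket P n 1 f g m' = f m') := by
  intro f g
  have hlen : l.length = n := hl.1
  have hq : IsPath src tgt [a] ∧ ¬InI R [a] := single_arrow_basis_index (R := R) a
  have hlcons : ∃ b t, l = a :: b :: t := by
    cases l with
    | nil => simp at ha
    | cons x xs =>
      cases xs with
      | nil => simp at hlen; omega
      | cons b t =>
        simp only [List.head?_cons, Option.some.injEq] at ha
        exact ⟨b, t, by rw [ha]⟩
  -- Claim 1
  have c1 : ∀ m' : List Arr, Gamma src tgt R n m' → circ P 1 n 1 f g m' = f m' := by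
    intro m' hm'
    have hm'len : m'.length = n := hm'.1
    obtain ⟨b, r, rfl⟩ : ∃ b r, m' = b :: r := by
      cases m' with
      | nil => simp at hm'len; omega
      | cons b r => exact ⟨b, r, rfl⟩
    have htake : (((b :: r).drop (1 - 1)).take 1) = [b] := by simp
    by_cases hb : b = a
    · subst hb
      have hval : g (((b :: r).drop (1 - 1)).take 1) = P.pbar [b] := by
        rw [htake, pbar_single]
        simp [g]
      rw [circ_pbar P ⟨[b], single_arrow_basis_index (R := R) b⟩ hval]
      have hsub : (b :: r).take (1 - 1) ++ [b] ++ (b :: r).drop (1 - 1 + 1) = b :: r := by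
        simp
      rw [hsub, if_pos hm']
    · have hval : g (((b :: r).drop (1 - 1)).take 1) = 0 := by
        rw [htake]
        simp only [g]
        rw [if_neg (by simpa using hb)]
      rw [circ_eq_zero_of_val_zero P hval]
      have hml : (b :: r) ≠ l := by
        intro h
        rw [← h] at ha
        simp only [List.head?_cons, Option.some.injEq] at ha
        exact hb ha
      simp only [f]
      rw [if_neg hml]
  -- Claim 2
  have c2 : ∀ i : ℕ, 2 ≤ i → i ≤ n →
      ∀ m' : List Arr, Gamma src tgt R n m' → circ P i n 1 f g m' = 0 := by
    intro i hi2 hin m' hm'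
    have hm'len : m'.length = n := hm'.1
    have hidx : i - 1 < m'.length := by omega
    have htake : ((m'.drop (i - 1)).take 1) = [m'[i - 1]] := by
      rw [List.drop_eq_getElem_cons hidx]
      rfl
    by_cases hb : m'[i - 1] = a
    · have hval : g ((m'.drop (i - 1)).take 1) = P.pbar [a] := by
        rw [htake, hb, pbar_single]
        simp [g]
      rw [circ_pbar P ⟨[a], hq⟩ hval]
      have hsub : m'.take (i - 1) ++ [a] ++ m'.drop (i - 1 + 1) = m' := by
        conv_rhs => rw [← List.take_append_drop (i - 1) m']
        rw [List.drop_eq_getElem_cons hidx, hb]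
        simp
      rw [hsub]
      by_cases hml : m' = l
      · exfalso
        subst hml
        exact no_repeat_aux htri hl.2.1 ha (by omega : 1 ≤ i - 1) (by omega) hb
      · simp only [f]
        rw [if_neg hml]
        simp
    · have hval : g ((m'.drop (i - 1)).take 1) = 0 := by
        rw [htake]
        simp only [g]
        rw [if_neg (by simpa using hb)]
      exact circ_eq_zero_of_val_zero P hval
  -- g ∘ f vanishes on anything of length ≤ n
  have hgf : ∀ m' : List Arr, m'.length ≤ n → circ P 1 1 n g f m' = 0 := by
    intro m' hm'len
    have htk : (m'.drop (1 - 1)).take n = m' := by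
      simp [List.take_of_length_le hm'len]
    by_cases hml : m' = l
    · subst hml
      have hval : f ((m'.drop (1 - 1)).take n) = P.pbar p := by
        rw [htk]
        simp [f]
      rw [circ_pbar P ⟨p, hpath, hpI⟩ hval]
      have hdrop : m'.drop (1 - 1 + n) = [] := by
        apply List.drop_eq_nil_of_le
        omega
      have hsub : m'.take (1 - 1) ++ p ++ m'.drop (1 - 1 + n) = p := by
        rw [hdrop]
        simp
      rw [hsub]
      have hcyc : p ≠ [a] := by
        intro hpa
        obtain ⟨b, t, hlbt⟩ := hlcons
        have hcomp : Composable src tgt (a :: b :: t) := by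
          rw [← hlbt]
          exact hl.2.1
        have hab : tgt a = src b := (List.isChain_cons_cons.mp hcomp).1
        have htail : Composable src tgt (b :: t) := (List.isChain_cons_cons.mp hcomp).2
        apply htri (b :: t) ⟨by simp, htail⟩
        have h2 : tgtOf tgt (b :: t) = tgtOf tgt m' := by
          rw [hlbt]
          simp [tgtOf]
        rw [h2, ← htgt, hpa]
        simp [srcOf, tgtOf, hab]
      have hgp : g p = 0 := by
        simp only [g]
        rw [if_neg hcyc]
      rw [hgp]
      simp
    · have hval : f ((m'.drop (1 - 1)).take n) = 0 := by
        rw [htk]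
        simp only [f]
        rw [if_neg hml]
      exact circ_eq_zero_of_val_zero P hval
  refine ⟨c1, c2, ?_, ?_⟩
  · intro m' hm'
    exact hgf m' (by rw [hm'.1]; omega)
  · intro m' hm'
    simp only [bracket, compProd]
    have h2 : ∑ i ∈ Finset.Icc 1 1, ((-1 : B) ^ ((i - 1) * (n - 1))) * circ P i 1 n g f m' = 0 := by
      rw [Finset.Icc_self, Finset.sum_singleton, hgf m' (by rw [hm'.1])]
      simp
    have h1 : ∑ i ∈ Finset.Icc 1 n, ((-1 : B) ^ ((i - 1) * (1 - 1))) * circ P i n 1 f g m'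
        = f m' := by
      rw [Finset.sum_eq_single_of_mem 1 (Finset.mem_Icc.mpr ⟨le_refl 1, by omega⟩)]
      · simp only [Nat.sub_self, Nat.mul_zero, pow_zero, one_mul]
        exact c1 m' hm'
      · intro i hi hne
        rcases Finset.mem_Icc.mp hi with ⟨hi1, hin⟩
        rw [c2 i (by omega) hin m' hm']
        simp
    rw [h1, h2]
    simp

end StringAlgebras

end
end
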